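/- arXiv:1311.2547 — 2 statements merged into one kernel-verified Lean document; each statement's English description precedes it below -/
import Mathlib

section
/- For vectors in ℝ^d with ‖r̂ − r‖₂ = ε ≤ ‖r‖₂/2, the cosine of the angle between r̂ and r satisfies ⟨r̂, r⟩/(‖r̂‖₂‖r‖₂) ≥ 1 − 2ε / min(‖r‖₂, ‖r‖₂²). -/
/-!
Write `ε = ‖x - y‖`. Since `⟪x, y⟫ = ‖y‖² + ⟪x - y, y⟫ ≥ ‖y‖ (‖y‖ - ε)` and `‖x‖ ≤ ‖y‖ + ε`, the
cosine of the angle is at least `(‖y‖ - ε) / (‖y‖ + ε) = 1 - 2ε / (‖y‖ + ε) ≥ 1 - 2ε / ‖y‖`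
when `ε < ‖y‖`; otherwise `1 - 2ε / ‖y‖ ≤ -1`, and a cosine is never below `-1`.
Finally `min ‖y‖ ‖y‖² ≤ ‖y‖` only makes the bound weaker.
-/

open RealInnerProductSpace

section

variable {E : Type*} [NormedAddCommGroup E] [InnerProductSpace ℝ E]

theorem norm_mul_sub_norm_sub_le_real_inner (x y : E) :
    ‖y‖ * (‖y‖ - ‖x - y‖) ≤ ⟪x, y⟫ := by
  have hsplit : ⟪x, y⟫ = ⟪x - y, y⟫ + ‖y‖ ^ 2 := by
    rw [inner_sub_left, real_inner_self_eq_norm_sq]; ring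
  have hcs : -(‖x - y‖ * ‖y‖) ≤ ⟪x - y, y⟫ :=
    neg_le_of_abs_le (abs_real_inner_le_norm _ _)
  nlinarith

theorem div_le_real_inner_div_norm_mul_norm_of_norm_sub_lt {x y : E} (h : ‖x - y‖ < ‖y‖) :
    (‖y‖ - ‖x - y‖) / (‖y‖ + ‖x - y‖) ≤ ⟪x, y⟫ / (‖x‖ * ‖y‖) := by
  have hy : 0 < ‖y‖ := (norm_nonneg _).trans_lt h
  have hx_upper : ‖x‖ ≤ ‖y‖ + ‖x - y‖ := norm_le_norm_add_norm_sub' x y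
  have hx_lower : ‖y‖ - ‖x - y‖ ≤ ‖x‖ := by
    have := norm_sub_norm_le y x
    rw [norm_sub_rev] at this
    linarith
  have hx : 0 < ‖x‖ := by linarith
  calc (‖y‖ - ‖x - y‖) / (‖y‖ + ‖x - y‖)
      = ‖y‖ * (‖y‖ - ‖x - y‖) / ((‖y‖ + ‖x - y‖) * ‖y‖) := by
        field_simp
    _ ≤ ⟪x, y⟫ / (‖x‖ * ‖y‖) :=
        div_le_div₀ (by nlinarith [norm_mul_sub_norm_sub_le_real_inner x y])
          (norm_mul_sub_norm_sub_le_real_inner x y) (by positivity)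
          (by gcongr)

theorem one_sub_two_mul_norm_sub_div_le_real_inner_div_norm_mul_norm (x : E) {y : E}
    (hy : y ≠ 0) :
    1 - 2 * ‖x - y‖ / ‖y‖ ≤ ⟪x, y⟫ / (‖x‖ * ‖y‖) := by
  have hy_pos : 0 < ‖y‖ := norm_pos_iff.mpr hy
  rcases lt_or_ge ‖x - y‖ ‖y‖ with h | h
  · calc 1 - 2 * ‖x - y‖ / ‖y‖
        ≤ 1 - 2 * ‖x - y‖ / (‖y‖ + ‖x - y‖) := by
          gcongr; exact le_add_of_nonneg_right (norm_nonneg _)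
      _ = (‖y‖ - ‖x - y‖) / (‖y‖ + ‖x - y‖) := by
          field_simp; ring
      _ ≤ ⟪x, y⟫ / (‖x‖ * ‖y‖) := div_le_real_inner_div_norm_mul_norm_of_norm_sub_lt h
  · calc 1 - 2 * ‖x - y‖ / ‖y‖
        ≤ -1 := by
          have : 2 ≤ 2 * ‖x - y‖ / ‖y‖ := by rw [le_div_iff₀ hy_pos]; linarith
          linarith
      _ ≤ ⟪x, y⟫ / (‖x‖ * ‖y‖) := (abs_le.mp (abs_real_inner_div_norm_mul_norm_le_one x y)).1

end

theorem stmt_8_general {d : ℕ} (r rhat : EuclideanSpace ℝ (Fin d)) (hr : r ≠ 0) :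
    1 - 2 * ‖rhat - r‖ / min ‖r‖ (‖r‖ ^ 2)
      ≤ (inner ℝ rhat r : ℝ) / (‖rhat‖ * ‖r‖) := by
  have hpos : 0 < min ‖r‖ (‖r‖ ^ 2) := by
    have := norm_pos_iff.mpr hr
    positivity
  calc 1 - 2 * ‖rhat - r‖ / min ‖r‖ (‖r‖ ^ 2)
      ≤ 1 - 2 * ‖rhat - r‖ / ‖r‖ := by
        gcongr; exact min_le_left _ _
    _ ≤ inner ℝ rhat r / (‖rhat‖ * ‖r‖) :=
        one_sub_two_mul_norm_sub_div_le_real_inner_div_norm_mul_norm rhat hr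

/-- If `‖r̂ − r‖ = ε ≤ ‖r‖/2`, then the cosine of the angle between `r̂` and `r` satisfies
`⟨r̂,r⟩/(‖r̂‖‖r‖) ≥ 1 − 2ε/min(‖r‖, ‖r‖²)`. -/
theorem stmt_8 {d : ℕ} (r rhat : EuclideanSpace ℝ (Fin d)) (hr : r ≠ 0)
    (heps : ‖rhat - r‖ ≤ ‖r‖ / 2) :
    1 - 2 * ‖rhat - r‖ / min ‖r‖ (‖r‖ ^ 2)
      ≤ (inner ℝ rhat r : ℝ) / (‖rhat‖ * ‖r‖) :=
  stmt_8_general r rhat hr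
end

section
/- Davis–Kahan consequence: let Q, Q̂ be symmetric d×d matrices, let U (resp. Û) be the span of the eigenvectors of Q (resp. Q̂) corresponding to its k eigenvalues outside [λ₀ − Δ/2, λ₀ + Δ/2], where λ₀ has multiplicity d − k in Q and Δ = min_ℓ |λ_ℓ − λ₀| > 0 over the other eigenvalues. If ‖Q̂ − Q‖₂ ≤ Δε/(1+ε) for some 0 < ε ≤ 1/4, then the sine of the largest principal angle between U and Û is at most ε. -/
/-!
By Weyl's inequality every eigenvalue of `Q̂` in `[λ₀ - Δ/2, λ₀ + Δ/2]` lies within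
`η = ‖Q̂ - Q‖` of `λ₀`, so `Q̂ - λ₀` has norm at most `η` on `Û^⊥` and preserves it, while `Q - λ₀`
is invertible on `U` with inverse of norm at most `1/Δ`. For `x = (Q - λ₀) y ∈ U` and
`w = P_{Û^⊥} x`, the symmetry of `Q` gives
`‖w‖² = ⟪P_{Û^⊥} y, (Q̂ - λ₀) w⟫ - ⟪y, (Q̂ - Q) w⟫`, so the norm `s` of `P_{Û^⊥}` on `U`
satisfies `Δ s ≤ η (s + 1)`, i.e. `s ≤ η / (Δ - η)`, which is at most `ε` under the hypothesis.
-/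

open RealInnerProductSpace

section Perturbation

variable {E : Type*} [NormedAddCommGroup E] [InnerProductSpace ℝ E]
  {U W : Submodule ℝ E} [W.HasOrthogonalProjection] {A B : E →ₗ[ℝ] E} {η Δ : ℝ}

theorem mul_norm_starProjection_le_of_perturbation (hA : A.IsSymmetric) (hη : 0 ≤ η)
    (hΔ : 0 ≤ Δ) (hAB : ∀ z, ‖B z - A z‖ ≤ η * ‖z‖)
    (hBW : ∀ w ∈ W, B w ∈ W ∧ ‖B w‖ ≤ η * ‖w‖)
    (hAU : ∀ x ∈ U, ∃ y ∈ U, A y = x ∧ Δ * ‖y‖ ≤ ‖x‖) {s : ℝ} (hs0 : 0 ≤ s)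
    (hs : ∀ y ∈ U, ‖W.starProjection y‖ ≤ s * ‖y‖) {x : E} (hx : x ∈ U) :
    Δ * ‖W.starProjection x‖ ≤ η * (s + 1) * ‖x‖ := by
  obtain ⟨y, hyU, rfl, hy⟩ := hAU x hx
  set w := W.starProjection (A y)
  obtain ⟨hBw, hBw_le⟩ := hBW w (W.starProjection_apply_mem _)
  have hsylv : ‖w‖ ^ 2 = ⟪W.starProjection y, B w⟫ - ⟪y, B w - A w⟫ := by
    have hPw : W.starProjection w = w :=
      W.starProjection_eq_self_iff.mpr (W.starProjection_apply_mem _)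
    have hPBw : ⟪W.starProjection y, B w⟫ = ⟪y, B w⟫ := by
      rw [W.inner_starProjection_left_eq_right, W.starProjection_eq_self_iff.mpr hBw]
    rw [← real_inner_self_eq_norm_sq, W.inner_starProjection_left_eq_right, hPw, hA, hPBw,
      inner_sub_right]
    ring
  have hw : ‖w‖ ^ 2 ≤ η * (s + 1) * ‖y‖ * ‖w‖ := by
    calc ‖w‖ ^ 2 ≤ ‖W.starProjection y‖ * ‖B w‖ + ‖y‖ * ‖B w - A w‖ := by
          rw [hsylv]
          exact (abs_le.mp ((abs_sub _ _).trans (add_le_add (abs_real_inner_le_norm _ _)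
            (abs_real_inner_le_norm _ _)))).2
      _ ≤ s * ‖y‖ * (η * ‖w‖) + ‖y‖ * (η * ‖w‖) := by
          gcongr
          exacts [hs y hyU, hAB w]
      _ = η * (s + 1) * ‖y‖ * ‖w‖ := by ring
  have hw' : ‖w‖ ≤ η * (s + 1) * ‖y‖ := by
    rcases (norm_nonneg w).eq_or_lt with h | h
    · rw [← h]; positivity
    · exact le_of_mul_le_mul_right (by rwa [← sq]) h
  calc Δ * ‖w‖ ≤ Δ * (η * (s + 1) * ‖y‖) := by gcongr
    _ = η * (s + 1) * (Δ * ‖y‖) := by ring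
    _ ≤ η * (s + 1) * ‖A y‖ := by gcongr

theorem norm_starProjection_le_of_perturbation (hA : A.IsSymmetric) (hη : 0 ≤ η)
    (hηΔ : η < Δ) (hAB : ∀ z, ‖B z - A z‖ ≤ η * ‖z‖)
    (hBW : ∀ w ∈ W, B w ∈ W ∧ ‖B w‖ ≤ η * ‖w‖)
    (hAU : ∀ x ∈ U, ∃ y ∈ U, A y = x ∧ Δ * ‖y‖ ≤ ‖x‖) {x : E} (hx : x ∈ U) :
    ‖W.starProjection x‖ ≤ η / (Δ - η) * ‖x‖ := by
  have hΔ : 0 < Δ := hη.trans_lt hηΔ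
  set f : U →L[ℝ] E := W.starProjection ∘L U.subtypeL
  have hf : ∀ y ∈ U, ‖W.starProjection y‖ ≤ ‖f‖ * ‖y‖ := fun y hy => f.le_opNorm ⟨y, hy⟩
  have hfΔ : ‖f‖ ≤ η * (‖f‖ + 1) / Δ := by
    refine f.opNorm_le_bound (by positivity) fun y => ?_
    rw [div_mul_eq_mul_div, le_div_iff₀' hΔ]
    exact mul_norm_starProjection_le_of_perturbation hA hη hΔ.le hAB hBW hAU (norm_nonneg f) hf
      y.2
  have hf_le : ‖f‖ ≤ η / (Δ - η) := by
    rw [le_div_iff₀ hΔ] at hfΔ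
    rw [le_div_iff₀ (sub_pos.mpr hηΔ)]
    linarith
  calc ‖W.starProjection x‖ ≤ ‖f‖ * ‖x‖ := hf x hx
    _ ≤ η / (Δ - η) * ‖x‖ := by gcongr

end Perturbation

namespace OrthonormalBasis

variable {ι 𝕜 E : Type*} [Fintype ι] [RCLike 𝕜] [NormedAddCommGroup E] [InnerProductSpace 𝕜 E]
  (b : OrthonormalBasis ι 𝕜 E) (s : Set ι)

theorem isOrtho_span_image_compl :
    Submodule.span 𝕜 (b '' s) ⟂ Submodule.span 𝕜 (b '' sᶜ) := by
  rw [Submodule.isOrtho_span]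
  rintro _ ⟨i, hi, rfl⟩ _ ⟨j, hj, rfl⟩
  exact b.orthonormal.2 (ne_of_mem_of_not_mem hi hj)

theorem mem_span_image_iff {x : E} :
    x ∈ Submodule.span 𝕜 (b '' s) ↔ ∀ i ∉ s, inner 𝕜 (b i) x = 0 := by
  refine ⟨fun hx i hi => ?_, fun h => ?_⟩
  · exact (b.isOrtho_span_image_compl s).symm.inner_eq (Submodule.subset_span ⟨i, hi, rfl⟩) hx
  · rw [← b.sum_repr' x]
    refine Submodule.sum_mem _ fun i _ => ?_
    by_cases hi : i ∈ s
    · exact Submodule.smul_mem _ _ (Submodule.subset_span ⟨i, hi, rfl⟩)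
    · simp [h i hi]

theorem orthogonal_span_image :
    (Submodule.span 𝕜 (b '' s))ᗮ = Submodule.span 𝕜 (b '' sᶜ) := by
  refine le_antisymm (fun x hx => ?_) (b.isOrtho_span_image_compl s).symm.le
  rw [mem_span_image_iff]
  intro i hi
  exact Submodule.inner_right_of_mem_orthogonal
    (Submodule.subset_span (Set.mem_image_of_mem b (not_not.mp hi))) hx

end OrthonormalBasis

theorem Matrix.norm_toEuclideanLin_sub_apply_le {n : Type*} [Fintype n] [DecidableEq n]
    (M N : Matrix n n ℝ) (z : EuclideanSpace ℝ n) :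
    ‖toEuclideanLin N z - toEuclideanLin M z‖ ≤ ‖toEuclideanCLM (𝕜 := ℝ) (N - M)‖ * ‖z‖ := by
  simpa [← coe_toEuclideanCLM_eq_toEuclideanLin] using
    (toEuclideanCLM (𝕜 := ℝ) (N - M)).le_opNorm z

namespace Matrix.IsHermitian

variable {n : Type*} [Fintype n] [DecidableEq n] {M : Matrix n n ℝ} (hM : M.IsHermitian)

theorem toEuclideanLin_eigenvectorBasis (i : n) :
    toEuclideanLin M (hM.eigenvectorBasis i) = hM.eigenvalues i • hM.eigenvectorBasis i := by
  apply (WithLp.equiv 2 _).injective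
  simp [hM.mulVec_eigenvectorBasis i]

theorem inner_eigenvectorBasis_toEuclideanLin_sub_smul (c : ℝ) (i : n)
    (z : EuclideanSpace ℝ n) :
    ⟪hM.eigenvectorBasis i, toEuclideanLin M z - c • z⟫
      = (hM.eigenvalues i - c) * ⟪hM.eigenvectorBasis i, z⟫ := by
  rw [inner_sub_right, ← isSymmetric_toEuclideanLin_iff.mpr hM, toEuclideanLin_eigenvectorBasis,
    real_inner_smul_left, real_inner_smul_right]
  ring

theorem norm_toEuclideanLin_sub_smul_sq (c : ℝ) (z : EuclideanSpace ℝ n) :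
    ‖toEuclideanLin M z - c • z‖ ^ 2
      = ∑ i, (hM.eigenvalues i - c) ^ 2 * ⟪hM.eigenvectorBasis i, z⟫ ^ 2 := by
  simp_rw [← hM.eigenvectorBasis.sum_sq_inner_right,
    inner_eigenvectorBasis_toEuclideanLin_sub_smul, mul_pow]

theorem iSup_eigenspace_eq_span (p : ℝ → Prop) :
    ⨆ (μ : ℝ) (_ : p μ), Module.End.eigenspace (toEuclideanLin M) μ
      = Submodule.span ℝ (hM.eigenvectorBasis '' {i | p (hM.eigenvalues i)}) := by
  refine le_antisymm (iSup₂_le fun μ hμ x hx => ?_) (Submodule.span_le.mpr ?_)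
  · rw [Module.End.mem_eigenspace_iff] at hx
    rw [OrthonormalBasis.mem_span_image_iff]
    intro i hi
    have h := hM.inner_eigenvectorBasis_toEuclideanLin_sub_smul μ i x
    rw [hx, sub_self, inner_zero_right, eq_comm, mul_eq_zero, sub_eq_zero] at h
    exact h.resolve_left fun h' => hi (by simpa [h'] using hμ)
  · rintro _ ⟨i, hi, rfl⟩
    exact Submodule.mem_iSup_of_mem _ (Submodule.mem_iSup_of_mem hi
      (Module.End.mem_eigenspace_iff.mpr (hM.toEuclideanLin_eigenvectorBasis i)))

variable {s : Set n} {c : ℝ} {z : EuclideanSpace ℝ n}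

theorem toEuclideanLin_sub_smul_mem_span
    (hz : z ∈ Submodule.span ℝ (hM.eigenvectorBasis '' s)) :
    toEuclideanLin M z - c • z ∈ Submodule.span ℝ (hM.eigenvectorBasis '' s) := by
  rw [OrthonormalBasis.mem_span_image_iff] at hz ⊢
  intro i hi
  rw [inner_eigenvectorBasis_toEuclideanLin_sub_smul, hz i hi, mul_zero]

theorem norm_toEuclideanLin_sub_smul_le {η : ℝ} (hη : 0 ≤ η)
    (h : ∀ i ∈ s, |hM.eigenvalues i - c| ≤ η)
    (hz : z ∈ Submodule.span ℝ (hM.eigenvectorBasis '' s)) :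
    ‖toEuclideanLin M z - c • z‖ ≤ η * ‖z‖ := by
  refine (sq_le_sq₀ (norm_nonneg _) (by positivity)).mp ?_
  rw [hM.norm_toEuclideanLin_sub_smul_sq, mul_pow, ← hM.eigenvectorBasis.sum_sq_inner_right,
    Finset.mul_sum]
  refine Finset.sum_le_sum fun i _ => ?_
  by_cases hi : i ∈ s
  · refine mul_le_mul_of_nonneg_right ?_ (sq_nonneg _)
    rw [← sq_abs (hM.eigenvalues i - c)]
    exact pow_le_pow_left₀ (abs_nonneg _) (h i hi) 2
  · simp [(hM.eigenvectorBasis.mem_span_image_iff s).mp hz i hi]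

theorem mul_norm_le_norm_toEuclideanLin_sub_smul {m : ℝ} (hm : 0 ≤ m)
    (h : ∀ i ∈ s, m ≤ |hM.eigenvalues i - c|)
    (hz : z ∈ Submodule.span ℝ (hM.eigenvectorBasis '' s)) :
    m * ‖z‖ ≤ ‖toEuclideanLin M z - c • z‖ := by
  refine (sq_le_sq₀ (by positivity) (norm_nonneg _)).mp ?_
  rw [hM.norm_toEuclideanLin_sub_smul_sq, mul_pow, ← hM.eigenvectorBasis.sum_sq_inner_right,
    Finset.mul_sum]
  refine Finset.sum_le_sum fun i _ => ?_
  by_cases hi : i ∈ s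
  · refine mul_le_mul_of_nonneg_right ?_ (sq_nonneg _)
    rw [← sq_abs (hM.eigenvalues i - c)]
    exact pow_le_pow_left₀ hm (h i hi) 2
  · simp [(hM.eigenvectorBasis.mem_span_image_iff s).mp hz i hi]

theorem exists_toEuclideanLin_sub_smul_eq {Δ : ℝ} (hΔ : 0 < Δ)
    (h : ∀ i ∈ s, Δ ≤ |hM.eigenvalues i - c|) {x : EuclideanSpace ℝ n}
    (hx : x ∈ Submodule.span ℝ (hM.eigenvectorBasis '' s)) :
    ∃ y ∈ Submodule.span ℝ (hM.eigenvectorBasis '' s),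
      toEuclideanLin M y - c • y = x ∧ Δ * ‖y‖ ≤ ‖x‖ := by
  rw [OrthonormalBasis.mem_span_image_iff] at hx
  set y := ∑ i,
    ((hM.eigenvalues i - c)⁻¹ * ⟪hM.eigenvectorBasis i, x⟫) • hM.eigenvectorBasis i
  have hy : ∀ i, ⟪hM.eigenvectorBasis i, y⟫
      = (hM.eigenvalues i - c)⁻¹ * ⟪hM.eigenvectorBasis i, x⟫ :=
    hM.eigenvectorBasis.orthonormal.inner_right_fintype _
  have hyU : y ∈ Submodule.span ℝ (hM.eigenvectorBasis '' s) := by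
    rw [OrthonormalBasis.mem_span_image_iff]
    intro i hi
    rw [hy, hx i hi, mul_zero]
  have hAy : toEuclideanLin M y - c • y = x := by
    refine InnerProductSpace.ext_inner_left_basis hM.eigenvectorBasis.toBasis fun i => ?_
    rw [OrthonormalBasis.coe_toBasis, inner_eigenvectorBasis_toEuclideanLin_sub_smul, hy]
    by_cases hi : i ∈ s
    · have : hM.eigenvalues i - c ≠ 0 := abs_pos.mp (hΔ.trans_le (h i hi))
      field_simp
    · rw [hx i hi, mul_zero, mul_zero]
  refine ⟨y, hyU, hAy, ?_⟩
  rw [← hAy]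
  exact hM.mul_norm_le_norm_toEuclideanLin_sub_smul hΔ.le h hyU

theorem exists_abs_eigenvalues_sub_le {N : Matrix n n ℝ} (hN : N.IsHermitian) (j : n) :
    ∃ i, |hM.eigenvalues i - hN.eigenvalues j| ≤ ‖toEuclideanCLM (𝕜 := ℝ) (N - M)‖ := by
  obtain ⟨i, -, hi⟩ := Finset.exists_min_image Finset.univ
    (fun i => |hM.eigenvalues i - hN.eigenvalues j|) ⟨j, Finset.mem_univ j⟩
  refine ⟨i, ?_⟩
  have hw : ‖hN.eigenvectorBasis j‖ = 1 := hN.eigenvectorBasis.orthonormal.1 j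
  have := hM.mul_norm_le_norm_toEuclideanLin_sub_smul (abs_nonneg _) (s := Set.univ)
    (fun i' _ => hi i' (Finset.mem_univ i'))
    ((hM.eigenvectorBasis.mem_span_image_iff _).mpr (by simp) : hN.eigenvectorBasis j ∈ _)
  rw [← hN.toEuclideanLin_eigenvectorBasis, norm_sub_rev, hw, mul_one] at this
  simpa [hw] using this.trans (norm_toEuclideanLin_sub_apply_le M N _)

theorem norm_sub_starProjection_le_of_gap {N : Matrix n n ℝ} (hN : N.IsHermitian)
    {lam0 Δ : ℝ} (hgap : ∀ i, hM.eigenvalues i ≠ lam0 → Δ ≤ |hM.eigenvalues i - lam0|)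
    (hR : ‖toEuclideanCLM (𝕜 := ℝ) (N - M)‖ < Δ / 2) {x : EuclideanSpace ℝ n}
    (hx : x ∈ Submodule.span ℝ (hM.eigenvectorBasis '' {i | Δ / 2 < |hM.eigenvalues i - lam0|})) :
    ‖x - (Submodule.span ℝ
        (hN.eigenvectorBasis '' {i | Δ / 2 < |hN.eigenvalues i - lam0|})).starProjection x‖
      ≤ ‖toEuclideanCLM (𝕜 := ℝ) (N - M)‖ / (Δ - ‖toEuclideanCLM (𝕜 := ℝ) (N - M)‖) * ‖x‖ := by
  set η := ‖toEuclideanCLM (𝕜 := ℝ) (N - M)‖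
  have hη : 0 ≤ η := norm_nonneg _
  have hweyl : ∀ i, |hN.eigenvalues i - lam0| ≤ Δ / 2 → |hN.eigenvalues i - lam0| ≤ η := by
    intro i hi
    obtain ⟨j, hj⟩ := hM.exists_abs_eigenvalues_sub_le hN i
    have hj0 : hM.eigenvalues j = lam0 := by
      by_contra hne
      have := abs_sub_le (hM.eigenvalues j) (hN.eigenvalues i) lam0
      linarith [hgap j hne]
    rwa [← hj0, abs_sub_comm]
  rw [← Submodule.starProjection_orthogonal_val]
  refine norm_starProjection_le_of_perturbation
    ((isSymmetric_toEuclideanLin_iff.mpr hM).sub (LinearMap.IsSymmetric.id.smul (c := lam0) rfl))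
    (B := toEuclideanLin N - lam0 • LinearMap.id) hη (by linarith) (fun z => ?_)
    (fun w hw => ?_) (fun y hy => ?_) hx
  · simp only [LinearMap.sub_apply, LinearMap.smul_apply, LinearMap.id_apply,
      sub_sub_sub_cancel_right]
    exact norm_toEuclideanLin_sub_apply_le M N z
  · rw [OrthonormalBasis.orthogonal_span_image, Set.compl_ofPred] at hw ⊢
    simp_rw [not_lt] at hw ⊢
    exact ⟨hN.toEuclideanLin_sub_smul_mem_span hw, hN.norm_toEuclideanLin_sub_smul_le hη hweyl hw⟩
  · refine hM.exists_toEuclideanLin_sub_smul_eq (by linarith) (fun i hi => hgap i ?_) hy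
    rintro h
    rw [Set.mem_ofPred_eq, h, sub_self, abs_zero] at hi
    linarith

end Matrix.IsHermitian

theorem stmt_17_general {d : ℕ} (Q Qhat : Matrix (Fin d) (Fin d) ℝ)
    (hQ : Q.IsHermitian) (hQhat : Qhat.IsHermitian)
    (lam0 Δ ε : ℝ) (hΔ : 0 < Δ) (hε : 0 < ε) (hε4 : ε ≤ 1/4)
    (hgap : ∀ i, hQ.eigenvalues i ≠ lam0 → Δ ≤ |hQ.eigenvalues i - lam0|)
    (hnorm : ‖Matrix.toEuclideanCLM (𝕜 := ℝ) (Qhat - Q)‖ ≤ Δ * ε / (1 + ε))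
    (U Uhat : Submodule ℝ (EuclideanSpace ℝ (Fin d)))
    (hU : U = ⨆ (μ : ℝ) (_ : μ ∉ Set.Icc (lam0 - Δ/2) (lam0 + Δ/2)),
      Module.End.eigenspace (Matrix.toEuclideanLin Q : Module.End ℝ (EuclideanSpace ℝ (Fin d))) μ)
    (hUhat : Uhat = ⨆ (μ : ℝ) (_ : μ ∉ Set.Icc (lam0 - Δ/2) (lam0 + Δ/2)),
      Module.End.eigenspace (Matrix.toEuclideanLin Qhat : Module.End ℝ (EuclideanSpace ℝ (Fin d))) μ) :
    ∀ x ∈ U, ‖x - (Submodule.orthogonalProjectionOnto Uhat x : EuclideanSpace ℝ (Fin d))‖ ≤ ε * ‖x‖ := by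
  set η := ‖Matrix.toEuclideanCLM (𝕜 := ℝ) (Qhat - Q)‖
  rw [le_div_iff₀ (by positivity)] at hnorm
  have hηΔ : η < Δ / 2 := by nlinarith
  have hηε : η / (Δ - η) ≤ ε := by rw [div_le_iff₀ (by linarith)]; linarith
  have hIcc : ∀ t, t ∉ Set.Icc (lam0 - Δ / 2) (lam0 + Δ / 2) ↔ Δ / 2 < |t - lam0| := by
    intro t
    rw [← Real.closedBall_eq_Icc, Metric.mem_closedBall, Real.dist_eq, not_le]
  simp_rw [hIcc] at hU hUhat
  rw [hQ.iSup_eigenspace_eq_span] at hU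
  rw [hQhat.iSup_eigenspace_eq_span] at hUhat
  subst hU hUhat
  intro x hx
  rw [← Submodule.starProjection_apply]
  exact (hQ.norm_sub_starProjection_le_of_gap hQhat hgap hηΔ hx).trans (by gcongr)

/-- Davis–Kahan consequence: let `Q, Q̂` be symmetric, `λ₀` an eigenvalue of `Q` of
multiplicity `d − k` with all other eigenvalues at distance at least `Δ > 0` from `λ₀`, and
let `U` (resp. `Û`) be the span of the eigenvectors of `Q` (resp. `Q̂`) for eigenvalues
outside `[λ₀ − Δ/2, λ₀ + Δ/2]`. If `‖Q̂ − Q‖₂ ≤ Δ ε/(1+ε)` with `0 < ε ≤ 1/4`, then the sine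
of the largest principal angle between `U` and `Û` is at most `ε`, i.e. every `x ∈ U`
satisfies `‖x − proj_Û x‖ ≤ ε ‖x‖`. -/
theorem stmt_17 {d k : ℕ} (Q Qhat : Matrix (Fin d) (Fin d) ℝ)
    (hQ : Q.IsHermitian) (hQhat : Qhat.IsHermitian)
    (lam0 Δ ε : ℝ) (hΔ : 0 < Δ) (hε : 0 < ε) (hε4 : ε ≤ 1/4)
    (hmult : (Finset.univ.filter fun i => hQ.eigenvalues i = lam0).card = d - k)
    (hgap : ∀ i, hQ.eigenvalues i ≠ lam0 → Δ ≤ |hQ.eigenvalues i - lam0|)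
    (hnorm : ‖Matrix.toEuclideanCLM (𝕜 := ℝ) (Qhat - Q)‖ ≤ Δ * ε / (1 + ε))
    (U Uhat : Submodule ℝ (EuclideanSpace ℝ (Fin d)))
    (hU : U = ⨆ (μ : ℝ) (_ : μ ∉ Set.Icc (lam0 - Δ/2) (lam0 + Δ/2)),
      Module.End.eigenspace (Matrix.toEuclideanLin Q : Module.End ℝ (EuclideanSpace ℝ (Fin d))) μ)
    (hUhat : Uhat = ⨆ (μ : ℝ) (_ : μ ∉ Set.Icc (lam0 - Δ/2) (lam0 + Δ/2)),
      Module.End.eigenspace (Matrix.toEuclideanLin Qhat : Module.End ℝ (EuclideanSpace ℝ (Fin d))) μ) :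
    ∀ x ∈ U, ‖x - (Submodule.orthogonalProjectionOnto Uhat x : EuclideanSpace ℝ (Fin d))‖ ≤ ε * ‖x‖ :=
  stmt_17_general Q Qhat hQ hQhat lam0 Δ ε hΔ hε hε4 hgap hnorm U Uhat hU hUhat
end
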